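/- For any group A and n ≥ 0, there is an isomorphism of right ℤ/p[A/A^(n)]-modules A^(n)/A^(n+1) ≅ H_1(A; ℤ/p[A/A^(n)]), where A acts on A^(n)/A^(n+1) by conjugation. -/

import Mathlib

/-!
Write `N = A^(n)` and `Q = A/N`, and let `[g]m` denote the class of the 1-chain `m·[g]`.
The boundary of `[g|h]` gives `[gh]m = [h](m·ḡ) + [g]m`; as `ḡ = 1` for `g ∈ N`, the map
`x ↦ [x]1` is a homomorphism from `N` to an abelian group killed by `p`, hence it factors
through `N/A^(n+1)`, and it lands in the cycles. For the inverse fix a section `s` of `A → Q`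
with `s 1 = 1` and send `[g]q` to `s(q) g s(q ḡ)⁻¹ ∈ N`: this is a cocycle, so it kills
boundaries, and `s 1 = 1` makes it a left inverse. In the other order the composite differs
from the identity by `z ↦ Γ(d₁ z)` with `Γ(q) = [s q]1`, which vanishes on cycles.
Equivariance is the identity `[a x a⁻¹]1 = [x]ā` for `x ∈ N`.
-/

open scoped commutatorElement

/-- The derived p-series: `G^(0) = G`, `G^(n+1) = [G^(n),G^(n)] (G^(n))^p`. -/
def derivedP (p : ℕ) (G : Type*) [Group G] : ℕ → Subgroup G
  | 0 => ⊤
  | n + 1 =>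
      Subgroup.closure
        ({x | ∃ a ∈ derivedP p G n, ∃ b ∈ derivedP p G n, x = ⁅a, b⁆} ∪
         {x | ∃ a ∈ derivedP p G n, x = a ^ p})

theorem derivedP_map_le {G H : Type*} [Group G] [Group H] (p : ℕ) (φ : G →* H) (n : ℕ) :
    (derivedP p G n).map φ ≤ derivedP p H n := by
  induction n with
  | zero => exact le_top
  | succ n ih =>
      rw [derivedP, derivedP, MonoidHom.map_closure]
      apply Subgroup.closure_mono
      rintro x ⟨y, hy | hy, rfl⟩
      · obtain ⟨a, ha, b, hb, rfl⟩ := hy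
        exact Or.inl ⟨φ a, ih (Subgroup.mem_map_of_mem φ ha), φ b,
          ih (Subgroup.mem_map_of_mem φ hb), by simp [commutatorElement_def]⟩
      · obtain ⟨a, ha, rfl⟩ := hy
        exact Or.inr ⟨φ a, ih (Subgroup.mem_map_of_mem φ ha), by simp⟩

instance derivedP_normal (p : ℕ) {G : Type*} [Group G] (n : ℕ) : (derivedP p G n).Normal := by
  constructor
  intro x hx g
  have := derivedP_map_le p (MulAut.conj g).toMonoidHom n (Subgroup.mem_map_of_mem _ hx)
  simpa using this

/-- The map `A/A^(n) → B/B^(n)` induced by `φ`. -/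
def derivedPQuotMap {G H : Type*} [Group G] [Group H] (p : ℕ) (φ : G →* H) (n : ℕ) :
    G ⧸ derivedP p G n →* H ⧸ derivedP p H n :=
  QuotientGroup.map _ _ φ (Subgroup.map_le_iff_le_comap.mp (derivedP_map_le p φ n))

section TwistedH1

open Finsupp

variable (p : ℕ) {A : Type*} [Group A] (n : ℕ)

/-- The quotient `Q = A/A^(n)`, over which the twisted coefficients live. -/
@[reducible] def derQ := A ⧸ derivedP p A n

/-- The coefficient ring `ℤ/p[A/A^(n)]`. -/
@[reducible] noncomputable def derM (A : Type*) [Group A] (n : ℕ) :=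
  MonoidAlgebra (ZMod p) (A ⧸ derivedP p A n)

/-- Degree-1 differential of the bar complex of `A` with coefficients in the
`(ℤA, ℤ/p[A/A^(n)])`-bimodule `ℤ/p[A/A^(n)]`: `m·[g] ↦ m·g − m`. -/
noncomputable def twD1 (A : Type*) [Group A] (n : ℕ) :
    (A →₀ derM p A n) →ₗ[ZMod p] derM p A n :=
  Finsupp.lsum (ZMod p) fun g =>
    LinearMap.mulRight (ZMod p)
        (MonoidAlgebra.of (ZMod p) (A ⧸ derivedP p A n) (QuotientGroup.mk g)) -
      LinearMap.id

/-- Degree-2 differential of the bar complex of `A` with coefficients in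
`ℤ/p[A/A^(n)]`: `m·[g|h] ↦ (m·g)·[h] − m·[gh] + m·[g]`. -/
noncomputable def twD2 (A : Type*) [Group A] (n : ℕ) :
    ((A × A) →₀ derM p A n) →ₗ[ZMod p] (A →₀ derM p A n) :=
  Finsupp.lsum (ZMod p) fun x =>
    (Finsupp.lsingle x.2).comp
        (LinearMap.mulRight (ZMod p)
          (MonoidAlgebra.of (ZMod p) (A ⧸ derivedP p A n) (QuotientGroup.mk x.1))) -
      Finsupp.lsingle (x.1 * x.2) + Finsupp.lsingle x.1

/-- `H_1(A; ℤ/p[A/A^(n)])`: 1-cycles modulo 1-boundaries of the bar complex with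
coefficients in `ℤ/p[A/A^(n)]`, realized as the image of the cycles in the quotient of
the 1-chains by the boundaries. -/
@[reducible] noncomputable def twH1 (A : Type*) [Group A] (n : ℕ) :=
  ↥(Submodule.map (Submodule.mkQ (LinearMap.range (twD2 p A n)))
      (LinearMap.ker (twD1 p A n)))

/-- Left multiplication by `q ∈ A/A^(n)` on the coefficients of the 1-chains: the
residual `ℤ/p[A/A^(n)]`-module structure on the bar complex. -/
noncomputable def twTau1 (q : A ⧸ derivedP p A n) :
    (A →₀ derM p A n) →ₗ[ZMod p] (A →₀ derM p A n) :=
  Finsupp.mapRange.linearMap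
    (LinearMap.mulLeft (ZMod p) (MonoidAlgebra.of (ZMod p) (A ⧸ derivedP p A n) q))

lemma twD1_tau (q : A ⧸ derivedP p A n) :
    (twD1 p A n).comp (twTau1 p n q) =
      (LinearMap.mulLeft (ZMod p)
        (MonoidAlgebra.of (ZMod p) (A ⧸ derivedP p A n) q)).comp (twD1 p A n) := by
  apply Finsupp.lhom_ext
  intro g m
  simp only [twD1, twTau1, LinearMap.coe_comp, Function.comp_apply,
    Finsupp.mapRange.linearMap_apply, Finsupp.mapRange_single, Finsupp.lsum_single,
    LinearMap.sub_apply, LinearMap.id_apply, LinearMap.mulRight_apply,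
    LinearMap.mulLeft_apply, map_sub, mul_assoc]

lemma twD2_tau (q : A ⧸ derivedP p A n) :
    (twD2 p A n).comp
        (Finsupp.mapRange.linearMap
          (LinearMap.mulLeft (ZMod p) (MonoidAlgebra.of (ZMod p) (A ⧸ derivedP p A n) q))) =
      (twTau1 p n q).comp (twD2 p A n) := by
  apply Finsupp.lhom_ext
  intro x m
  simp only [twD2, twTau1, LinearMap.coe_comp, Function.comp_apply,
    Finsupp.mapRange.linearMap_apply, Finsupp.mapRange_single, Finsupp.lsum_single,
    LinearMap.sub_apply, LinearMap.add_apply, LinearMap.mulRight_apply,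
    LinearMap.mulLeft_apply, Finsupp.lsingle_apply, map_sub, map_add, mul_assoc]

/-- The action of `q ∈ A/A^(n)` on `H_1(A; ℤ/p[A/A^(n)])`: the
`ℤ/p[A/A^(n)]`-module structure of `H_1`. -/
noncomputable def twH1Act (q : A ⧸ derivedP p A n) :
    twH1 p A n →ₗ[ZMod p] twH1 p A n :=
  (Submodule.mapQ (LinearMap.range (twD2 p A n)) (LinearMap.range (twD2 p A n))
      (twTau1 p n q)
      (by
        rintro y ⟨z, rfl⟩
        refine ⟨Finsupp.mapRange.linearMap
            (LinearMap.mulLeft (ZMod p) (MonoidAlgebra.of (ZMod p) (A ⧸ derivedP p A n) q)) z, ?_⟩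
        have h := congrFun (congrArg DFunLike.coe (twD2_tau p n q)) z
        simp only [LinearMap.coe_comp, Function.comp_apply] at h
        exact h)).restrict
    (by
      rintro y ⟨w, hw, rfl⟩
      refine ⟨twTau1 p n q w, ?_, ?_⟩
      · have h := congrFun (congrArg DFunLike.coe (twD1_tau p n q)) w
        simp only [LinearMap.coe_comp, Function.comp_apply] at h
        exact LinearMap.mem_ker.mpr
          (by rw [h, LinearMap.mem_ker.mp hw, map_zero])
      · rfl)

instance (p : ℕ) {A : Type*} [Group A] (n : ℕ) :
    ((derivedP p A (n + 1)).comap (derivedP p A n).subtype).Normal :=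
  (derivedP_normal p (n + 1)).comap _

open scoped Classical in
noncomputable def normalizedOut {G : Type*} [Group G] (H : Subgroup G) [H.Normal] (q : G ⧸ H) :
    G :=
  if q = 1 then 1 else q.out

lemma normalizedOut_one {G : Type*} [Group G] (H : Subgroup G) [H.Normal] :
    normalizedOut H 1 = 1 :=
  if_pos rfl

lemma mk_normalizedOut {G : Type*} [Group G] (H : Subgroup G) [H.Normal] (q : G ⧸ H) :
    (QuotientGroup.mk (normalizedOut H q) : G ⧸ H) = q := by
  unfold normalizedOut
  split_ifs with h
  · rw [h, QuotientGroup.mk_one]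
  · exact QuotientGroup.out_eq' q

lemma normalizedOut_mul_mul_inv_mem {G : Type*} [Group G] (H : Subgroup G) [H.Normal]
    (q : G ⧸ H) (g : G) :
    normalizedOut H q * g * (normalizedOut H (q * QuotientGroup.mk g))⁻¹ ∈ H := by
  rw [← QuotientGroup.eq_one_iff, QuotientGroup.mk_mul, QuotientGroup.mk_mul,
    QuotientGroup.mk_inv, mk_normalizedOut, mk_normalizedOut, mul_inv_cancel]

lemma commutator_mem_derivedP_succ {a b : A} (ha : a ∈ derivedP p A n)
    (hb : b ∈ derivedP p A n) : ⁅a, b⁆ ∈ derivedP p A (n + 1) := by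
  rw [derivedP]
  exact Subgroup.subset_closure (Or.inl ⟨a, ha, b, hb, rfl⟩)

lemma pow_mem_derivedP_succ {a : A} (ha : a ∈ derivedP p A n) :
    a ^ p ∈ derivedP p A (n + 1) := by
  rw [derivedP]
  exact Subgroup.subset_closure (Or.inr ⟨a, ha, rfl⟩)

lemma comap_derivedP_succ_le_ker {G : Type*} [CommGroup G] (f : derivedP p A n →* G)
    (hf : ∀ g : G, g ^ p = 1) :
    (derivedP p A (n + 1)).comap (derivedP p A n).subtype ≤ f.ker := by
  have h : derivedP p A (n + 1) ≤ f.ker.map (derivedP p A n).subtype := by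
    rw [derivedP, Subgroup.closure_le]
    rintro x (⟨a, ha, b, hb, rfl⟩ | ⟨a, ha, rfl⟩)
    · refine Subgroup.mem_map.2 ⟨⁅(⟨a, ha⟩ : derivedP p A n), ⟨b, hb⟩⁆, ?_, rfl⟩
      rw [MonoidHom.mem_ker, map_commutatorElement, commutatorElement_eq_one_iff_mul_comm,
        mul_comm]
    · exact Subgroup.mem_map.2 ⟨⟨a, ha⟩ ^ p, by rw [MonoidHom.mem_ker, map_pow, hf], rfl⟩
  rw [← Subgroup.comap_map_eq_self_of_injective (derivedP p A n).subtype_injective f.ker]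
  exact Subgroup.comap_mono h

abbrev derivedPFactor (A : Type*) [Group A] (n : ℕ) :=
  ↥(derivedP p A n) ⧸ ((derivedP p A (n + 1)).comap (derivedP p A n).subtype)

instance : CommGroup (derivedPFactor p A n) where
  mul_comm := by
    rintro ⟨x⟩ ⟨y⟩
    refine QuotientGroup.eq_iff_div_mem.2 ?_
    have h : ((x * y / (y * x) : derivedP p A n) : A) = ⁅(x : A), (y : A)⁆ := by
      simp only [Subgroup.coe_mul, Subgroup.coe_inv, commutatorElement_def, div_eq_mul_inv,
        mul_inv_rev, mul_assoc]
    show ((x * y / (y * x) : derivedP p A n) : A) ∈ derivedP p A (n + 1)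
    exact h ▸ commutator_mem_derivedP_succ p n x.2 y.2

lemma derivedPFactor_pow_eq_one (v : derivedPFactor p A n) : v ^ p = 1 := by
  induction v using QuotientGroup.induction_on with
  | H x =>
    rw [← QuotientGroup.mk_pow, QuotientGroup.eq_one_iff]
    exact pow_mem_derivedP_succ p n x.2

noncomputable instance : Module (ZMod p) (Additive (derivedPFactor p A n)) :=
  AddCommGroup.zmodModule fun v => congrArg Additive.ofMul (derivedPFactor_pow_eq_one p n v.toMul)

lemma twD1_single (g : A) (m : derM p A n) :
    twD1 p A n (Finsupp.single g m) = m * MonoidAlgebra.single (QuotientGroup.mk g) 1 - m := by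
  simp [twD1, MonoidAlgebra.of_apply]

lemma twD2_single (g h : A) (m : derM p A n) :
    twD2 p A n (Finsupp.single (g, h) m) =
      Finsupp.single h (m * MonoidAlgebra.single (QuotientGroup.mk g) 1) -
        Finsupp.single (g * h) m + Finsupp.single g m := by
  simp [twD2, MonoidAlgebra.of_apply]

lemma single_mk_eq_one_of_mem {a : A} (ha : a ∈ derivedP p A n) :
    (MonoidAlgebra.single (QuotientGroup.mk a) 1 : derM p A n) = 1 := by
  rw [(QuotientGroup.eq_one_iff a).2 ha, MonoidAlgebra.one_def]

abbrev twC1Quot (A : Type*) [Group A] (n : ℕ) :=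
  (A →₀ derM p A n) ⧸ LinearMap.range (twD2 p A n)

noncomputable abbrev twH1Submodule (A : Type*) [Group A] (n : ℕ) :
    Submodule (ZMod p) (twC1Quot p A n) :=
  Submodule.map (Submodule.mkQ (LinearMap.range (twD2 p A n))) (LinearMap.ker (twD1 p A n))

noncomputable def chainClass (g : A) (m : derM p A n) : twC1Quot p A n :=
  Submodule.Quotient.mk (Finsupp.single g m)

lemma chainClass_mul (g h : A) (m : derM p A n) :
    chainClass p n (g * h) m =
      chainClass p n h (m * MonoidAlgebra.single (QuotientGroup.mk g) 1) + chainClass p n g m := by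
  have hb : (Submodule.Quotient.mk (twD2 p A n (Finsupp.single (g, h) m)) : twC1Quot p A n) = 0 :=
    (Submodule.Quotient.mk_eq_zero _).2 (LinearMap.mem_range_self _ _)
  rw [twD2_single, Submodule.Quotient.mk_add, Submodule.Quotient.mk_sub, sub_add_eq_add_sub,
    sub_eq_zero] at hb
  exact hb.symm

lemma chainClass_one (m : derM p A n) : chainClass p n 1 m = 0 := by
  have h := chainClass_mul p n 1 1 m
  rw [one_mul, QuotientGroup.mk_one, ← MonoidAlgebra.one_def, mul_one] at h
  exact left_eq_add.1 h

lemma chainClass_inv (g : A) (m : derM p A n) :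
    chainClass p n g⁻¹ (m * MonoidAlgebra.single (QuotientGroup.mk g) 1) =
      -chainClass p n g m := by
  have h := chainClass_mul p n g g⁻¹ m
  rw [mul_inv_cancel, chainClass_one] at h
  exact eq_neg_of_add_eq_zero_left h.symm

lemma chainClass_mul_of_mem {a : A} (ha : a ∈ derivedP p A n) (b : A) (m : derM p A n) :
    chainClass p n (a * b) m = chainClass p n b m + chainClass p n a m := by
  rw [chainClass_mul, single_mk_eq_one_of_mem p n ha, mul_one]

lemma chainClass_conj (a : A) {x : A} (hx : x ∈ derivedP p A n) :
    chainClass p n (a * x * a⁻¹) 1 =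
      chainClass p n x (MonoidAlgebra.single (QuotientGroup.mk a) 1) := by
  have h := chainClass_inv p n a 1
  rw [one_mul] at h
  rw [mul_assoc, chainClass_mul, chainClass_mul, one_mul, single_mk_eq_one_of_mem p n hx, mul_one,
    h]
  abel

lemma chainClass_mem_twH1Submodule (x : derivedP p A n) :
    chainClass p n (x : A) 1 ∈ twH1Submodule p A n := by
  refine ⟨Finsupp.single (x : A) 1, ?_, rfl⟩
  rw [SetLike.mem_coe, LinearMap.mem_ker, twD1_single, single_mk_eq_one_of_mem p n x.2, mul_one,
    sub_self]

noncomputable def chainHom : derivedP p A n →* Multiplicative (twC1Quot p A n) where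
  toFun x := Multiplicative.ofAdd (chainClass p n x 1)
  map_one' := congrArg Multiplicative.ofAdd (chainClass_one p n 1)
  map_mul' x y := congrArg Multiplicative.ofAdd
    ((chainClass_mul_of_mem p n x.2 y 1).trans (add_comm _ _))

noncomputable def toTwC1Quot : Additive (derivedPFactor p A n) →ₗ[ZMod p] twC1Quot p A n :=
  (MonoidHom.toAdditiveLeft (QuotientGroup.lift _ (chainHom p n)
    (comap_derivedP_succ_le_ker p n _ fun c =>
      congrArg Multiplicative.ofAdd (ZModModule.char_nsmul_eq_zero p c.toAdd)))).toZModLinearMap p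

lemma toTwC1Quot_mk (x : derivedP p A n) :
    toTwC1Quot p n (Additive.ofMul (QuotientGroup.mk x)) = chainClass p n (x : A) 1 :=
  rfl

lemma ofMul_mk_surjective :
    Function.Surjective fun x : derivedP p A n =>
      Additive.ofMul (QuotientGroup.mk x : derivedPFactor p A n) :=
  Additive.ofMul.surjective.comp QuotientGroup.mk_surjective

noncomputable def toTwH1 : Additive (derivedPFactor p A n) →ₗ[ZMod p] twH1 p A n :=
  (toTwC1Quot p n).codRestrict (twH1Submodule p A n) fun v => by
    obtain ⟨x, rfl⟩ := ofMul_mk_surjective p n v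
    exact chainClass_mem_twH1Submodule p n x

noncomputable def sectionCocycleElem (g : A) (q : A ⧸ derivedP p A n) : derivedP p A n :=
  ⟨normalizedOut _ q * g * (normalizedOut _ (q * QuotientGroup.mk g))⁻¹,
    normalizedOut_mul_mul_inv_mem _ q g⟩

lemma sectionCocycleElem_mul (g h : A) (q : A ⧸ derivedP p A n) :
    sectionCocycleElem p n (g * h) q =
      sectionCocycleElem p n g q * sectionCocycleElem p n h (q * QuotientGroup.mk g) := by
  apply Subtype.ext
  simp only [sectionCocycleElem, Subgroup.coe_mul, QuotientGroup.mk_mul, mul_assoc]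
  group

lemma sectionCocycleElem_coe_one (x : derivedP p A n) :
    sectionCocycleElem p n (x : A) 1 = x := by
  apply Subtype.ext
  simp [sectionCocycleElem, normalizedOut_one, (QuotientGroup.eq_one_iff _).2 x.2]

noncomputable def sectionCocycle (g : A) (q : A ⧸ derivedP p A n) :
    Additive (derivedPFactor p A n) :=
  Additive.ofMul (QuotientGroup.mk (sectionCocycleElem p n g q))

lemma sectionCocycle_mul (g h : A) (q : A ⧸ derivedP p A n) :
    sectionCocycle p n (g * h) q =
      sectionCocycle p n h (q * QuotientGroup.mk g) + sectionCocycle p n g q := by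
  rw [sectionCocycle, sectionCocycleElem_mul, QuotientGroup.mk_mul, ofMul_mul, add_comm]
  rfl

noncomputable def chainsToFactor :
    (A →₀ derM p A n) →ₗ[ZMod p] Additive (derivedPFactor p A n) :=
  Finsupp.lsum (ZMod p) fun g =>
    (MonoidAlgebra.basis _ (ZMod p)).constr (ZMod p) (sectionCocycle p n g)

lemma chainsToFactor_single (g : A) (q : A ⧸ derivedP p A n) :
    chainsToFactor p n (Finsupp.single g (MonoidAlgebra.single q 1)) = sectionCocycle p n g q := by
  rw [chainsToFactor, Finsupp.lsum_single, ← MonoidAlgebra.basis_apply, Module.Basis.constr_basis]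

lemma chainsToFactor_comp_twD2 : chainsToFactor p n ∘ₗ twD2 p A n = 0 := by
  refine Finsupp.lhom_ext' fun ⟨g, h⟩ => (MonoidAlgebra.basis _ (ZMod p)).ext fun q => ?_
  rw [LinearMap.comp_apply, LinearMap.comp_apply, MonoidAlgebra.basis_apply, Finsupp.lsingle_apply,
    twD2_single, MonoidAlgebra.single_mul_single, mul_one, map_add, map_sub,
    chainsToFactor_single, chainsToFactor_single, chainsToFactor_single, sectionCocycle_mul,
    LinearMap.zero_comp, LinearMap.zero_apply]
  abel

noncomputable def twC1QuotToFactor :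
    twC1Quot p A n →ₗ[ZMod p] Additive (derivedPFactor p A n) :=
  (LinearMap.range (twD2 p A n)).liftQ (chainsToFactor p n)
    (LinearMap.range_le_ker_iff.2 (chainsToFactor_comp_twD2 p n))

noncomputable def ofTwH1 : twH1 p A n →ₗ[ZMod p] Additive (derivedPFactor p A n) :=
  twC1QuotToFactor p n ∘ₗ (twH1Submodule p A n).subtype

lemma ofTwH1_comp_toTwH1 : ofTwH1 (A := A) p n ∘ₗ toTwH1 p n = LinearMap.id := by
  ext v
  obtain ⟨x, rfl⟩ := ofMul_mk_surjective p n v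
  change chainsToFactor p n (Finsupp.single (x : A) 1) = _
  rw [MonoidAlgebra.one_def, chainsToFactor_single, sectionCocycle, sectionCocycleElem_coe_one]
  rfl

lemma chainClass_sectionCocycleElem (g : A) (q : A ⧸ derivedP p A n) :
    chainClass p n (sectionCocycleElem p n g q : A) 1 =
      chainClass p n g (MonoidAlgebra.single q 1) + chainClass p n (normalizedOut _ q) 1 -
        chainClass p n (normalizedOut _ (q * QuotientGroup.mk g)) 1 := by
  have hinv := chainClass_inv p n (normalizedOut _ (q * QuotientGroup.mk g)) 1
  rw [one_mul, mk_normalizedOut] at hinv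
  dsimp only [sectionCocycleElem]
  rw [mul_assoc, chainClass_mul, chainClass_mul, one_mul, mk_normalizedOut,
    MonoidAlgebra.single_mul_single, mul_one, hinv]
  abel

noncomputable def chainsCorrection : derM p A n →ₗ[ZMod p] twC1Quot p A n :=
  (MonoidAlgebra.basis _ (ZMod p)).constr (ZMod p) fun q => chainClass p n (normalizedOut _ q) 1

lemma chainsCorrection_single (q : A ⧸ derivedP p A n) :
    chainsCorrection p n (MonoidAlgebra.single q 1) = chainClass p n (normalizedOut _ q) 1 :=
  (MonoidAlgebra.basis _ (ZMod p)).constr_basis (ZMod p) _ q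

lemma toTwC1Quot_comp_chainsToFactor :
    toTwC1Quot p n ∘ₗ chainsToFactor p n =
      (LinearMap.range (twD2 p A n)).mkQ - chainsCorrection p n ∘ₗ twD1 p A n := by
  refine Finsupp.lhom_ext' fun g => (MonoidAlgebra.basis _ (ZMod p)).ext fun q => ?_
  rw [MonoidAlgebra.basis_apply]
  simp only [LinearMap.comp_apply, LinearMap.sub_apply, Finsupp.lsingle_apply]
  rw [chainsToFactor_single, sectionCocycle, toTwC1Quot_mk, chainClass_sectionCocycleElem,
    twD1_single, MonoidAlgebra.single_mul_single, mul_one, map_sub, chainsCorrection_single,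
    chainsCorrection_single]
  change _ = chainClass p n g (MonoidAlgebra.single q 1) - _
  abel

lemma toTwH1_comp_ofTwH1 : toTwH1 (A := A) p n ∘ₗ ofTwH1 p n = LinearMap.id := by
  refine LinearMap.ext fun ⟨_, z, hz, h⟩ => Subtype.ext ?_
  subst h
  change toTwC1Quot p n (chainsToFactor p n z) = (LinearMap.range (twD2 p A n)).mkQ z
  rw [← LinearMap.comp_apply, toTwC1Quot_comp_chainsToFactor, LinearMap.sub_apply,
    LinearMap.comp_apply, LinearMap.mem_ker.1 hz, map_zero, sub_zero]

noncomputable def derivedPFactorEquivTwH1 :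
    Additive (derivedPFactor p A n) ≃ₗ[ZMod p] twH1 p A n :=
  LinearEquiv.ofLinearMap (toTwH1 p n) (ofTwH1 p n) (toTwH1_comp_ofTwH1 p n)
    (ofTwH1_comp_toTwH1 p n)

lemma coe_derivedPFactorEquivTwH1_mk (x : derivedP p A n) :
    (derivedPFactorEquivTwH1 p n (Additive.ofMul (QuotientGroup.mk x)) : twC1Quot p A n) =
      chainClass p n (x : A) 1 :=
  rfl

lemma derivedPFactorEquivTwH1_conj (a : A) (x : derivedP p A n) :
    derivedPFactorEquivTwH1 p n (Additive.ofMul (QuotientGroup.mk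
        (⟨a * x * a⁻¹, (derivedP_normal p n).conj_mem (x : A) x.2 a⟩ : derivedP p A n))) =
      twH1Act p n (QuotientGroup.mk a)
        (derivedPFactorEquivTwH1 p n (Additive.ofMul (QuotientGroup.mk x))) := by
  apply Subtype.ext
  rw [coe_derivedPFactorEquivTwH1_mk, twH1Act, LinearMap.coe_restrict_apply,
    coe_derivedPFactorEquivTwH1_mk, chainClass_conj p n a x.2]
  simp [chainClass, twTau1, MonoidAlgebra.of_apply]

theorem derivedP_succ_quotient_equiv_twisted_H1_general (p : ℕ)
    {A : Type*} [Group A] (n : ℕ) :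
    ∃ e : Additive (↥(derivedP p A n) ⧸
        ((derivedP p A (n + 1)).comap (derivedP p A n).subtype)) ≃+ twH1 p A n,
      ∀ (a : A) (x : ↥(derivedP p A n)),
        e (Additive.ofMul (QuotientGroup.mk
            (⟨a * ↑x * a⁻¹, (derivedP_normal p n).conj_mem ↑x x.2 a⟩ : ↥(derivedP p A n)))) =
          twH1Act p n (QuotientGroup.mk a)
            (e (Additive.ofMul (QuotientGroup.mk x))) :=
  ⟨(derivedPFactorEquivTwH1 p n).toAddEquiv, derivedPFactorEquivTwH1_conj p n⟩

/-- `A^(n)/A^(n+1) ≅ H_1(A; ℤ/p[A/A^(n)])` as `ℤ/p[A/A^(n)]`-modules,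
where `A` acts on `A^(n)/A^(n+1)` by conjugation: there is an additive equivalence
intertwining the conjugation action with the `A/A^(n)`-action on `H_1` (and hence, as
group elements span the group algebra, an equivalence of modules). -/
theorem derivedP_succ_quotient_equiv_twisted_H1 (p : ℕ) (hp : p.Prime)
    {A : Type*} [Group A] (n : ℕ) :
    ∃ e : Additive (↥(derivedP p A n) ⧸
        ((derivedP p A (n + 1)).comap (derivedP p A n).subtype)) ≃+ twH1 p A n,
      ∀ (a : A) (x : ↥(derivedP p A n)),
        e (Additive.ofMul (QuotientGroup.mk
            (⟨a * ↑x * a⁻¹, (derivedP_normal p n).conj_mem ↑x x.2 a⟩ : ↥(derivedP p A n)))) =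
          twH1Act p n (QuotientGroup.mk a)
            (e (Additive.ofMul (QuotientGroup.mk x))) :=
  derivedP_succ_quotient_equiv_twisted_H1_general p n

end TwistedH1
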